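/- In the group G = (Z/r)^{n−1} ⋊_ψ Z/(r(n−1)) with ψ cyclically permuting generators α_1,…,α_{n−1}, for any element v = α_0^{m_0} α_1^{m_1} ⋯ α_{n−1}^{m_{n−1}} with α_0 = x^{n−1}, one has (vx)^{n−1} = α_0^{m_0(n−1)+1} μ^{m_1+⋯+m_{n−1}}, where μ = α_1 α_2 ⋯ α_{n−1}. -/

import Mathlib

/-- Permutations of `Fin m` act on `(ZMod r)^m` by permuting coordinates. -/
def permMulAut (r m : ℕ) : Equiv.Perm (Fin m) →* MulAut (Multiplicative (Fin m → ZMod r)) :=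
  MonoidHom.mk' (fun σ => AddEquiv.toMultiplicative
    { Equiv.arrowCongr σ (Equiv.refl (ZMod r)) with map_add' := fun _ _ => rfl })
    (fun σ τ => by ext v; rfl)

lemma finRotate_pow_self : ∀ m : ℕ, (finRotate m) ^ m = 1
  | 0 => rfl
  | 1 => by rw [pow_one, finRotate_one]; rfl
  | (m + 2) => by
      have h : orderOf (finRotate (m + 2)) = m + 2 := by
        rw [← Equiv.Perm.lcm_cycleType, cycleType_finRotate,
          Multiset.lcm_singleton, normalize_eq]
      have h2 := pow_orderOf_eq_one (finRotate (m + 2))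
      rwa [h] at h2

/-- The homomorphism `ℤ → Aut((ZMod r)^m)` sending `1` to the cyclic shift. -/
def zShiftHom (r m : ℕ) : ℤ →+ Additive (MulAut (Multiplicative (Fin m → ZMod r))) :=
  AddMonoidHom.mk' (fun k => Additive.ofMul (permMulAut r m (finRotate m) ^ k))
    (fun a b => by rw [zpow_add]; rfl)

lemma zShiftHom_eq_zero (r m : ℕ) : zShiftHom r m ((r * m : ℕ) : ℤ) = 0 := by
  show Additive.ofMul ((permMulAut r m (finRotate m)) ^ ((r * m : ℕ) : ℤ)) = 0
  rw [zpow_natCast, pow_mul', ← map_pow, finRotate_pow_self, map_one, one_pow]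
  rfl

/-- The action of `ZMod (r*m)` on `(ZMod r)^m` in which the generator acts by the cyclic
shift of coordinates. -/
def cycleActionHom (r m : ℕ) :
    Multiplicative (ZMod (r * m)) →* MulAut (Multiplicative (Fin m → ZMod r)) :=
  AddMonoidHom.toMultiplicativeLeft (ZMod.lift (r * m) ⟨zShiftHom r m, zShiftHom_eq_zero r m⟩)

/-- The group `G = (ZMod r)^m ⋊ ZMod (r*m)`, where the generator `x` of the cyclic factor
acts by cyclically permuting the coordinates. -/
abbrev GrpG (r m : ℕ) : Type :=
  SemidirectProduct (Multiplicative (Fin m → ZMod r)) (Multiplicative (ZMod (r * m)))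
    (cycleActionHom r m)

/-- The generator `x` of the cyclic factor of `G`. -/
def xGen (r m : ℕ) : GrpG r m :=
  SemidirectProduct.inr (Multiplicative.ofAdd (1 : ZMod (r * m)))

/-- The generator `α_i` of the abelian factor of `G`. -/
def alphaGen (r m : ℕ) (i : Fin m) : GrpG r m :=
  SemidirectProduct.inl (Multiplicative.ofAdd (Pi.single i (1 : ZMod r)))
/-! `α₀ = x^{n-1}` acts trivially on `(ZMod r)^{n-1}`, hence is central, and `v x = α₀^{m₀} a x`
with `a = α₁^{m₁} ⋯ α_{n-1}^{m_{n-1}}` in the abelian normal factor. In any group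
`(a x)^k = a (x a x⁻¹) ⋯ (x^{k-1} a x^{1-k}) x^k`; for `k = n - 1` the conjugates `x^j a x^{-j}`
run through all cyclic shifts of the exponent vector `(m₁, …, m_{n-1})`, whose sum is the
constant vector `∑ mᵢ`, i.e. `μ^{∑ mᵢ}`. -/

theorem mul_pow_eq_prod_conj_mul_pow {G : Type*} [Group G] (a x : G) (k : ℕ) :
    (a * x) ^ k = (List.ofFn fun j : Fin k => x ^ (j : ℕ) * a * (x ^ (j : ℕ))⁻¹).prod * x ^ k := by
  induction k with
  | zero => simp
  | succ k ih =>
    rw [pow_succ, ih, List.ofFn_succ', List.prod_concat]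
    simp only [Fin.val_castSucc, Fin.val_last]
    group

open Fin.NatCast in
theorem finRotate_succ_pow_apply (m j : ℕ) (i : Fin (m + 1)) :
    (finRotate (m + 1) ^ j) i = i + j := by
  induction j with
  | zero => simp
  | succ j ih =>
    rw [pow_succ', Equiv.Perm.mul_apply, ih, finRotate_apply, Nat.cast_succ, add_assoc]

theorem sum_finRotate_pow_symm_apply {M : Type*} [AddCommMonoid M] {m : ℕ} (f : Fin m → M)
    (i : Fin m) : ∑ j : Fin m, f ((finRotate m ^ (j : ℕ)).symm i) = ∑ k, f k := by
  cases m with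
  | zero => exact i.elim0
  | succ m =>
    refine Fintype.sum_equiv (Equiv.subLeft i) _ _ fun j => congrArg f ?_
    rw [Equiv.symm_apply_eq, finRotate_succ_pow_apply, Fin.cast_val_eq_self,
      Equiv.subLeft_apply, sub_add_cancel]

open SemidirectProduct Multiplicative

theorem SemidirectProduct.list_prod_ofFn_inl {N G : Type*} [CommGroup N] [Group G]
    {φ : G →* MulAut N} {k : ℕ} (g : Fin k → N) :
    (List.ofFn fun i => (inl (g i) : N ⋊[φ] G)).prod = inl (∏ i, g i) := by
  rw [← List.prod_ofFn, map_list_prod, List.map_ofFn]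
  rfl

section
variable {r m : ℕ}

theorem cycleActionHom_ofAdd_one :
    cycleActionHom r m (ofAdd 1) = permMulAut r m (finRotate m) := by
  rw [← Int.cast_one (R := ZMod (r * m))]
  exact congrArg Additive.toMul (ZMod.lift_coe _ _ 1) |>.trans (zpow_one _)

theorem xGen_pow_mul_inl_mul_inv (j : ℕ) (f : Fin m → ZMod r) :
    xGen r m ^ j * inl (ofAdd f) * (xGen r m ^ j)⁻¹
      = inl (ofAdd (f ∘ (finRotate m ^ j).symm)) := by
  rw [xGen, ← map_pow, ← map_inv, ← inl_aut, map_pow, cycleActionHom_ofAdd_one, ← map_pow]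
  rfl

theorem commute_xGen_pow_self (g : GrpG r m) : Commute (xGen r m ^ m) g := by
  have hφ : cycleActionHom r m (ofAdd 1 ^ m) = 1 := by
    rw [map_pow, cycleActionHom_ofAdd_one, ← map_pow, finRotate_pow_self, map_one]
  rw [xGen, ← map_pow]
  show inr _ * g = g * inr _
  ext : 1
  · simp only [mul_left, left_inr, right_inr, hφ, MulAut.one_apply, map_one, one_mul, mul_one]
  · exact mul_comm _ _

theorem alphaGen_zpow (i : Fin m) (k : ℤ) :
    alphaGen r m i ^ k = inl (ofAdd (Pi.single i (k : ZMod r))) := by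
  rw [alphaGen, ← map_zpow, ← ofAdd_zsmul, ← Pi.single_smul', zsmul_one]

theorem list_prod_ofFn_zpow_alphaGen (e : Fin m → ℤ) :
    (List.ofFn fun i => alphaGen r m i ^ e i).prod = inl (ofAdd fun i => (e i : ZMod r)) := by
  simp only [alphaGen_zpow, list_prod_ofFn_inl, ← ofAdd_sum, Finset.univ_sum_single]

theorem list_prod_ofFn_alphaGen_zpow (k : ℤ) :
    (List.ofFn fun i => alphaGen r m i).prod ^ k = inl (ofAdd fun _ => (k : ZMod r)) := by
  have hμ := list_prod_ofFn_zpow_alphaGen (r := r) (fun _ : Fin m => (1 : ℤ))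
  simp only [zpow_one, Int.cast_one] at hμ
  rw [hμ, ← map_zpow, ← ofAdd_zsmul]
  congr 2
  ext
  simp

theorem list_prod_ofFn_xGen_pow_conj_inl (f : Fin m → ZMod r) :
    (List.ofFn fun j : Fin m => xGen r m ^ (j : ℕ) * inl (ofAdd f) * (xGen r m ^ (j : ℕ))⁻¹).prod
      = inl (ofAdd fun _ => ∑ k, f k) := by
  simp only [xGen_pow_mul_inl_mul_inv, list_prod_ofFn_inl, ← ofAdd_sum]
  congr 2
  ext i
  rw [Finset.sum_apply]
  exact sum_finRotate_pow_symm_apply f i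

end

theorem vx_pow_formula_general (n r : ℕ)
    (m0 : ℤ) (mv : Fin (n - 1) → ℤ) :
    ((xGen r (n - 1) ^ (n - 1)) ^ m0 * (List.ofFn (fun i => alphaGen r (n - 1) i ^ mv i)).prod
        * xGen r (n - 1)) ^ (n - 1)
      = (xGen r (n - 1) ^ (n - 1)) ^ (m0 * ((n - 1 : ℕ) : ℤ) + 1)
        * (List.ofFn (fun i => alphaGen r (n - 1) i)).prod ^ (∑ i, mv i) := by
  set x := xGen r (n - 1)
  set z := x ^ (n - 1)
  rw [list_prod_ofFn_zpow_alphaGen, list_prod_ofFn_alphaGen_zpow, Int.cast_sum]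
  set a : GrpG r (n - 1) := inl (ofAdd fun i => (mv i : ZMod r))
  set c : GrpG r (n - 1) := inl (ofAdd fun _ => ∑ i, (mv i : ZMod r))
  have hax : (a * x) ^ (n - 1) = c * z := by
    rw [mul_pow_eq_prod_conj_mul_pow, list_prod_ofFn_xGen_pow_conj_inl]
  calc (z ^ m0 * a * x) ^ (n - 1) = (z ^ m0) ^ (n - 1) * (a * x) ^ (n - 1) := by
        rw [mul_assoc, ((commute_xGen_pow_self _).zpow_left m0).mul_pow]
    _ = z ^ (m0 * (n - 1 : ℕ) + 1) * c := by
        rw [hax, (commute_xGen_pow_self c).symm.eq, ← mul_assoc, ← zpow_natCast, ← zpow_mul,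
          ← zpow_add_one]

/-- In `G = (ZMod r)^{n-1} ⋊ ZMod (r(n-1))`, for `v = α_0^{m_0} α_1^{m_1} ⋯ α_{n-1}^{m_{n-1}}`
with `α_0 = x^{n-1}`, one has
`(vx)^{n-1} = α_0^{m_0(n-1)+1} μ^{m_1+⋯+m_{n-1}}` where `μ = α_1 ⋯ α_{n-1}`. -/
theorem vx_pow_formula (n r : ℕ) (hn : 2 ≤ n) (hr : 2 ≤ r)
    (m0 : ℤ) (mv : Fin (n - 1) → ℤ) :
    ((xGen r (n - 1) ^ (n - 1)) ^ m0 * (List.ofFn (fun i => alphaGen r (n - 1) i ^ mv i)).prod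
        * xGen r (n - 1)) ^ (n - 1)
      = (xGen r (n - 1) ^ (n - 1)) ^ (m0 * ((n - 1 : ℕ) : ℤ) + 1)
        * (List.ofFn (fun i => alphaGen r (n - 1) i)).prod ^ (∑ i, mv i) :=
  vx_pow_formula_general n r m0 mv
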